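/- arXiv:1202.2395 — 3 statements merged into one kernel-verified Lean document; each statement's English description precedes it below -/
import Mathlib

section
/- For real e₂ with |e₂| < min(1/|β|, 1/|1−β|) (interpreting 1/0 as ∞), the function f(e₂) = α(1+(1−β)e₂)/(1+βe₂) + (1−α)(1+βe₂)/(1+(1−β)e₂) has second-order Taylor expansion at 0 equal to 1 − (1−2α)(1−2β)e₂ + (1−α−β)(1−2β)e₂², i.e., f(e₂) − [1 − (1−2α)(1−2β)e₂ + (1−α−β)(1−2β)e₂²] = O(e₂³) as e₂ → 0. -/
/-!
Each of the two fractions has the shape `(1 + a e) / (1 + b e)`, whose second-order Taylor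
remainder is exactly `b² (a - b) e³ / (1 + b e)`, and the denominator stays near `1` as
`e → 0`. The expansion of `f` is `α` times that of the fraction with `(a, b) = (1 - β, β)`
plus `1 - α` times that with `(a, b) = (β, 1 - β)`.
-/

open Filter Asymptotics Topology

theorem one_add_mul_div_one_add_mul_sub_taylor_eventuallyEq (a b : ℝ) :
    (fun e : ℝ => (1 + a * e) / (1 + b * e) - (1 + (a - b) * e - b * (a - b) * e ^ 2))
      =ᶠ[𝓝 0] fun e => e ^ 3 * (b ^ 2 * (a - b) / (1 + b * e)) := by
  have hden : ∀ᶠ e in 𝓝 (0 : ℝ), 1 + b * e ≠ 0 :=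
    (continuous_const.add (continuous_const.mul continuous_id)).continuousAt.eventually_ne
      (by simp)
  filter_upwards [hden] with e he
  rw [div_sub' he, mul_div_assoc', div_left_inj' he]
  ring

theorem one_add_mul_div_one_add_mul_sub_taylor_isBigO (a b : ℝ) :
    (fun e : ℝ => (1 + a * e) / (1 + b * e) - (1 + (a - b) * e - b * (a - b) * e ^ 2))
      =O[𝓝 0] fun e => e ^ 3 := by
  have hbounded : (fun e : ℝ => b ^ 2 * (a - b) / (1 + b * e)) =O[𝓝 0] fun _ => (1 : ℝ) :=
    (ContinuousAt.div (by fun_prop) (by fun_prop) (by simp)).tendsto.isBigO_one ℝ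
  refine (one_add_mul_div_one_add_mul_sub_taylor_eventuallyEq a b).isBigO.trans ?_
  simpa using (isBigO_refl (fun e : ℝ => e ^ 3) (𝓝 0)).mul hbounded

/-- Second-order Taylor expansion of the ratio-product-ratio factor:
the remainder is O(e₂³) as e₂ → 0. -/
theorem stmt3 (α β : ℝ) :
    (fun e₂ : ℝ =>
        (α * (1 + (1 - β) * e₂) / (1 + β * e₂)
          + (1 - α) * (1 + β * e₂) / (1 + (1 - β) * e₂))
        - (1 - (1 - 2*α) * (1 - 2*β) * e₂ + (1 - α - β) * (1 - 2*β) * e₂^2))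
      =O[nhds (0 : ℝ)] (fun e₂ : ℝ => e₂^3) := by
  have hsplit := ((one_add_mul_div_one_add_mul_sub_taylor_isBigO (1 - β) β).const_mul_left α).add
    ((one_add_mul_div_one_add_mul_sub_taylor_isBigO β (1 - β)).const_mul_left (1 - α))
  refine hsplit.congr_left fun e => ?_
  simp only [mul_div_assoc]
  ring
end

section
/- The difference MSE(ȳ) − MSE₁(ŷ_{α,β}) = ((1−f)/n)·Ȳ²·C_X²·(1−2α)(1−2β)·[2C − (1−2α)(1−2β)] is positive if and only if either (1−2α)(1−2β) > 0 and C > (1/2)(1−2α)(1−2β), or (1−2α)(1−2β) < 0 and C < (1/2)(1−2α)(1−2β), assuming ((1−f)/n)Ȳ²C_X² > 0. -/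
theorem mul_two_mul_sub_pos_iff {𝕜 : Type*} [Field 𝕜] [LinearOrder 𝕜] [IsStrictOrderedRing 𝕜]
    {θ C : 𝕜} :
    0 < θ * (2 * C - θ) ↔ (0 < θ ∧ 1 / 2 * θ < C) ∨ (θ < 0 ∧ C < 1 / 2 * θ) := by
  have hpos : 0 < 2 * C - θ ↔ 1 / 2 * θ < C := by constructor <;> intro h <;> linarith
  have hneg : 2 * C - θ < 0 ↔ C < 1 / 2 * θ := by constructor <;> intro h <;> linarith
  rw [mul_pos_iff, hpos, hneg]

/-- The ratio-product-ratio estimator beats the sample mean (to first degree) iff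
(1-2α)(1-2β) and 2C - (1-2α)(1-2β) have the same sign. -/
theorem stmt14 (f n Ybar CX CY C α β : ℝ)
    (hpos : 0 < ((1 - f)/n) * Ybar^2 * CX^2) :
    (0 < ((1 - f)/n) * Ybar^2 * CY^2
        - ((1 - f)/n) * Ybar^2
            * (CY^2 + CX^2 * ((1 - 2*α) * (1 - 2*β)) * ((1 - 2*α) * (1 - 2*β) - 2*C)))
    ↔ ((0 < (1 - 2*α) * (1 - 2*β) ∧ (1/2) * ((1 - 2*α) * (1 - 2*β)) < C)
        ∨ ((1 - 2*α) * (1 - 2*β) < 0 ∧ C < (1/2) * ((1 - 2*α) * (1 - 2*β)))) := by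
  set θ := (1 - 2*α) * (1 - 2*β)
  have gain : ((1 - f)/n) * Ybar^2 * CY^2 - ((1 - f)/n) * Ybar^2 * (CY^2 + CX^2 * θ * (θ - 2*C))
      = ((1 - f)/n) * Ybar^2 * CX^2 * (θ * (2*C - θ)) := by ring
  rw [gain, mul_pos_iff_of_pos_left hpos]
  exact mul_two_mul_sub_pos_iff
end

section
/- Under the constraint (1−2α)(1−2β) = C, the first-order bias of the AOE equals ((1−f)/n)·C_X²·Ȳ·(1/2)·[C(1−2C) + (1−2β)²]; in particular, if 0 < C < 1/2 then this bias is strictly positive for every real β, since C(1−2C) > 0. -/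
/-! Since `1 - α - β` is the mean of `1 - 2α` and `1 - 2β`, the constraint `(1 - 2α)(1 - 2β) = C`
turns `(1 - 2β)(1 - α - β)` into `(C + (1 - 2β)²) / 2` and `(1 - 2β)(1 - 2α) C` into `C²`.
The bias factor is therefore `(C(1 - 2C) + (1 - 2β)²) / 2`, which is positive for `0 < C < 1/2`. -/

lemma bias_factor_eq_of_constraint {α β C : ℝ} (hconstraint : (1 - 2*α) * (1 - 2*β) = C) :
    (1 - 2*β) * (1 - α - β - (1 - 2*α) * C) = (C * (1 - 2*C) + (1 - 2*β)^2) / 2 := by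
  subst hconstraint
  ring

lemma bias_factor_pos {C : ℝ} (β : ℝ) (hC₀ : 0 < C) (hC₁ : C < 1/2) :
    0 < C * (1 - 2*C) + (1 - 2*β)^2 :=
  add_pos_of_pos_of_nonneg (mul_pos hC₀ (by linarith)) (sq_nonneg _)

theorem stmt18_general (f n Ybar CX C α β : ℝ)
    (hpos : 0 < ((1 - f)/n) * CX^2 * Ybar)
    (hconstraint : (1 - 2*α) * (1 - 2*β) = C) :
    ((1 - f)/n) * (1 - 2*β) * (1 - α - β - (1 - 2*α) * C) * CX^2 * Ybar
      = ((1 - f)/n) * CX^2 * Ybar * (1/2) * (C * (1 - 2*C) + (1 - 2*β)^2)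
    ∧ (0 < C → C < 1/2 →
        0 < ((1 - f)/n) * (1 - 2*β) * (1 - α - β - (1 - 2*α) * C) * CX^2 * Ybar) := by
  have hbias : ((1 - f)/n) * (1 - 2*β) * (1 - α - β - (1 - 2*α) * C) * CX^2 * Ybar
      = ((1 - f)/n) * CX^2 * Ybar * (1/2) * (C * (1 - 2*C) + (1 - 2*β)^2) := by
    linear_combination ((1 - f)/n) * CX^2 * Ybar * bias_factor_eq_of_constraint hconstraint
  refine ⟨hbias, fun hC₀ hC₁ => ?_⟩
  rw [hbias]
  exact mul_pos (mul_pos hpos one_half_pos) (bias_factor_pos β hC₀ hC₁)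

/-- First-order bias of an AOE, and its strict positivity when 0 < C < 1/2. -/
theorem stmt18 (f n Ybar CX C α β : ℝ)
    (hpos : 0 < ((1 - f)/n) * CX^2 * Ybar)
    (hconstraint : (1 - 2*α) * (1 - 2*β) = C) (hβ : β ≠ 1/2) :
    ((1 - f)/n) * (1 - 2*β) * (1 - α - β - (1 - 2*α) * C) * CX^2 * Ybar
      = ((1 - f)/n) * CX^2 * Ybar * (1/2) * (C * (1 - 2*C) + (1 - 2*β)^2)
    ∧ (0 < C → C < 1/2 →
        0 < ((1 - f)/n) * (1 - 2*β) * (1 - α - β - (1 - 2*α) * C) * CX^2 * Ybar) :=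
  stmt18_general f n Ybar CX C α β hpos hconstraint
end
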